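/- Let U be a nonempty finite type and R : U → ℝ, and for α > 0 let π_α(u) = exp(R u/α)/∑_{u'} exp(R u'/α) be the Boltzmann distribution of R. Then ∑_{u : R u = max R} π_α(u) tends to 1 as α → 0 from the right; in particular, for every u with R u < max R, π_α(u) tends to 0, and if R has a unique maximizer u* then π_α(u) tends to the indicator of u = u* for every u. (Concentration of the maximum-entropy optimal policy on reward maximizers under annealing, underlying the paper's Theorem 5.2.) -/

import Mathlib

/-!
Dividing numerator and denominator of `π_α(u)` by `exp (R v / α)` for any `v` gives
`π_α(u) ≤ exp ((R u - R v) / α)`, which tends to `0` as `α → 0⁺` whenever `R u < R v`.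
So all the mass off the maximizers vanishes, and since `π_α` sums to `1`, the mass on the
maximizers tends to `1`; with a unique maximizer this is the mass of that single point.
-/

open Filter Topology Classical

/-- The Boltzmann distribution of `R` at temperature `α`. -/
noncomputable def boltzmann {U : Type*} [Fintype U] (R : U → ℝ) (α : ℝ) (u : U) : ℝ :=
  Real.exp (R u / α) / ∑ u', Real.exp (R u' / α)

theorem tendsto_exp_div_nhdsGT_zero_of_neg {a : ℝ} (ha : a < 0) :
    Tendsto (fun α : ℝ => Real.exp (a / α)) (𝓝[>] 0) (𝓝 0) := by
  have h : Tendsto (fun α : ℝ => a * α⁻¹) (𝓝[>] 0) atBot :=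
    tendsto_inv_nhdsGT_zero.const_mul_atTop_of_neg ha
  exact (Real.tendsto_exp_atBot.comp h).congr fun α => by simp only [Function.comp, div_eq_mul_inv]

section Boltzmann

variable {U : Type*} [Fintype U] (R : U → ℝ)

theorem boltzmann_nonneg (α : ℝ) (u : U) : 0 ≤ boltzmann R α u := by
  unfold boltzmann
  positivity

theorem sum_boltzmann [Nonempty U] (α : ℝ) : ∑ u, boltzmann R α u = 1 := by
  have hpos : 0 < ∑ u', Real.exp (R u' / α) :=
    Finset.sum_pos (fun _ _ => Real.exp_pos _) Finset.univ_nonempty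
  simp only [boltzmann, ← Finset.sum_div, div_self hpos.ne']

theorem boltzmann_le_exp_sub_div (α : ℝ) (u v : U) :
    boltzmann R α u ≤ Real.exp ((R u - R v) / α) := by
  have hv : Real.exp (R v / α) ≤ ∑ u', Real.exp (R u' / α) :=
    Finset.single_le_sum (f := fun u' => Real.exp (R u' / α))
      (fun _ _ => (Real.exp_pos _).le) (Finset.mem_univ v)
  calc boltzmann R α u
      ≤ Real.exp (R u / α) / Real.exp (R v / α) :=
        div_le_div_of_nonneg_left (Real.exp_pos _).le (Real.exp_pos _) hv
    _ = Real.exp ((R u - R v) / α) := by rw [sub_div, Real.exp_sub]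

variable {R}

theorem tendsto_boltzmann_of_lt {u v : U} (huv : R u < R v) :
    Tendsto (fun α => boltzmann R α u) (𝓝[>] 0) (𝓝 0) :=
  tendsto_of_tendsto_of_tendsto_of_le_of_le tendsto_const_nhds
    (tendsto_exp_div_nhdsGT_zero_of_neg (sub_neg.mpr huv))
    (fun α => boltzmann_nonneg R α u) (fun α => boltzmann_le_exp_sub_div R α u v)

theorem tendsto_sum_boltzmann_of_forall_notMem [Nonempty U] (S : Finset U)
    (hS : ∀ u ∉ S, ∃ v, R u < R v) :
    Tendsto (fun α => ∑ u ∈ S, boltzmann R α u) (𝓝[>] 0) (𝓝 1) := by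
  have hcompl : Tendsto (fun α => ∑ u ∈ Sᶜ, boltzmann R α u) (𝓝[>] 0) (𝓝 0) := by
    simpa using tendsto_finsetSum Sᶜ fun u hu =>
      tendsto_boltzmann_of_lt (hS u (Finset.mem_compl.mp hu)).choose_spec
  have hsplit α : ∑ u ∈ S, boltzmann R α u = 1 - ∑ u ∈ Sᶜ, boltzmann R α u := by
    rw [← sum_boltzmann R α, ← Finset.sum_add_sum_compl S, add_sub_cancel_right]
  simpa only [hsplit, sub_zero] using hcompl.const_sub 1

end Boltzmann

theorem boltzmann_concentrates_on_maximizers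
    {U : Type*} [Fintype U] [Nonempty U] (R : U → ℝ) :
    (Tendsto
        (fun α : ℝ => ∑ u ∈ Finset.univ.filter
            (fun u => R u = Finset.univ.sup' Finset.univ_nonempty R), boltzmann R α u)
        (𝓝[>] (0 : ℝ)) (𝓝 1)) ∧
    (∀ u, R u < Finset.univ.sup' Finset.univ_nonempty R →
      Tendsto (fun α : ℝ => boltzmann R α u) (𝓝[>] (0 : ℝ)) (𝓝 0)) ∧
    (∀ ustar : U, (∀ u, u ≠ ustar → R u < R ustar) →
      ∀ u, Tendsto (fun α : ℝ => boltzmann R α u) (𝓝[>] (0 : ℝ))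
        (𝓝 (if u = ustar then 1 else 0))) := by
  obtain ⟨umax, -, humax⟩ := Finset.exists_mem_eq_sup' Finset.univ_nonempty R
  have below_max : ∀ u, R u < Finset.univ.sup' Finset.univ_nonempty R →
      Tendsto (fun α : ℝ => boltzmann R α u) (𝓝[>] 0) (𝓝 0) := fun u hu =>
    tendsto_boltzmann_of_lt (v := umax) (humax ▸ hu)
  refine ⟨?_, below_max, fun ustar hstar u => ?_⟩
  · refine tendsto_sum_boltzmann_of_forall_notMem _ fun u hu => ⟨umax, ?_⟩
    rw [← humax]
    simp only [Finset.mem_filter, Finset.mem_univ, true_and] at hu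
    exact lt_of_le_of_ne (Finset.le_sup' R (Finset.mem_univ u)) hu
  · by_cases hu : u = ustar
    · subst hu
      simpa using tendsto_sum_boltzmann_of_forall_notMem {u} fun v hv =>
        ⟨u, hstar v (Finset.notMem_singleton.mp hv)⟩
    · simpa only [hu, if_false] using tendsto_boltzmann_of_lt (hstar u hu)
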